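/- Theorem 3 (impact of cell width and depth on gradient variance): Let (Ω, 𝔉, P) be a probability space and let F : Ω × (ℝ^d)^n → ℝ be such that F(ω, ·) is differentiable for every ω; let x ∈ ℝ^d and let f_ω and f̂_ω be the widest-cell and narrowest-cell objectives built from F(ω, ·). Fix a deterministic parameter tuple (W^{(1)},…,W^{(n)}) with λ^{(j)} = ‖W^{(j)}‖, write Ŵ^{(k)} = ∏_{j=1}^{k} W^{(j)} for the effective weights, and fix i ∈ {1,…,n}. Assume that for every k ∈ {i,…,n} the random matrix ω ↦ ∂f_ω/∂V^{(k)}(Ŵ^{(1)},…,Ŵ^{(n)}) is integrable with E‖∂f_ω/∂V^{(k)}(Ŵ) − E ∂f_ω/∂V^{(k)}(Ŵ)‖² ≤ (σ^{(k)})². Then the gradient variance of the narrowest cell at (W^{(1)},…,W^{(n)}) satisfies E‖∂f̂_ω/∂W^{(i)} − E ∂f̂_ω/∂W^{(i)}‖² ≤ n Σ_{k=i}^{n} ((∏_{j=1}^{i−1} λ^{(j)}) · (∏_{j=i+1}^{k} λ^{(j)}) · σ^{(k)})². -/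

import Mathlib

/-!
Statement 7 (Theorem 3): impact of cell width and depth on gradient variance.
`‖·‖` is the spectral (ℓ2 operator) norm on real `d × d` matrices (scoped `Matrix.L2OpNorm`
instances); expectations are Bochner integrals with respect to the probability measure `μ`.
Indices of the `n` intermediate nodes are `0, …, n-1` (the paper's `W^{(1)}, …, W^{(n)}`
correspond to `W 0, …, W (n-1)`).  The reversed product convention
`∏_{j=a}^{b} W^{(j)} = W^{(b)} ⋯ W^{(a)}` is implemented by `prodRev`; the effective weights
are `Ŵ⁽ᵏ⁾ = prodRev W (Iic k)`; empty matrix products are the identity and empty real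
products are `1`.
-/

open scoped Matrix.Norms.L2Operator

open Matrix MeasureTheory

/-- Reversed (descending-index) product of the matrices `W j`, `j ∈ s`;
the empty product is the identity. -/
noncomputable def prodRev {n d : ℕ} (W : Fin n → Matrix (Fin d) (Fin d) ℝ)
    (s : Finset (Fin n)) : Matrix (Fin d) (Fin d) ℝ :=
  (((s.sort (· ≤ ·)).map W).reverse).prod

/-- `∂g/∂W⁽ⁱ⁾`: the `d × d` matrix whose `(a, b)` entry is the partial derivative of the scalar
function `g` of an `n`-tuple of `d × d` real matrices with respect to the `(a, b)` entry of the
`i`-th matrix argument. -/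
noncomputable def matGrad {n d : ℕ}
    (g : (Fin n → Matrix (Fin d) (Fin d) ℝ) → ℝ)
    (W : Fin n → Matrix (Fin d) (Fin d) ℝ) (i : Fin n) : Matrix (Fin d) (Fin d) ℝ :=
  Matrix.of fun a b => fderiv ℝ g W (Pi.single i (Matrix.single a b 1))

/-!
Along the line `t ↦ W + t • Pi.single i E`, the effective weight `Ŵ⁽ᵏ⁾` with `k < i` does not
move, and for `k ≥ i` only its factor `W⁽ⁱ⁾` moves, affinely: `Ŵ⁽ᵏ⁾ + t • (Aₖ * E * R)` with
`Aₖ = W⁽ᵏ⁾ ⋯ W⁽ⁱ⁺¹⁾` and `R = W⁽ⁱ⁻¹⁾ ⋯ W⁽¹⁾`. So the narrowest-cell gradient is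
`∑_{k ≥ i} Aₖᵀ * (∂f/∂V⁽ᵏ⁾)(Ŵ) * Rᵀ`, the image of the widest-cell block gradients under linear
maps of norm at most `‖Aₖ‖ ‖R‖ ≤ (∏_{j<i} λ⁽ʲ⁾)(∏_{i<j≤k} λ⁽ʲ⁾)`. The variance of a sum of
`m ≤ n` terms is at most `m` times the sum of their variances, by Cauchy–Schwarz.
-/

open Finset

theorem Finset.sort_union_of_forall_lt {α : Type*} [LinearOrder α] {s t : Finset α}
    (h : ∀ a ∈ s, ∀ b ∈ t, a < b) :
    (s ∪ t).sort (· ≤ ·) = s.sort (· ≤ ·) ++ t.sort (· ≤ ·) := by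
  classical
  induction s using Finset.induction_on_min with
  | empty => simp
  | insert a s has ih =>
    have ha_lt : ∀ b ∈ s ∪ t, a < b := by
      intro b hb
      rcases mem_union.1 hb with hb | hb
      · exact has b hb
      · exact h a (mem_insert_self a s) b hb
    rw [insert_union, sort_insert _ (fun b hb => (ha_lt b hb).le) (fun ha => (ha_lt a ha).false),
      sort_insert _ (fun b hb => (has b hb).le) (fun ha => (has a ha).false),
      ih fun a ha b hb => h a (mem_insert_of_mem ha) b hb]
    rfl

theorem LinearMap.apply_mul_single_mul {R l m n o : Type*} [CommSemiring R]
    [Fintype l] [Fintype m] [Fintype n] [Fintype o] [DecidableEq l] [DecidableEq m]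
    [DecidableEq n] [DecidableEq o]
    (φ : Matrix l o R →ₗ[R] R) (A : Matrix l m R) (B : Matrix n o R) (a : m) (b : n) :
    φ (A * Matrix.single a b (1 : R) * B)
      = (Aᵀ * Matrix.of (fun p q => φ (Matrix.single p q 1)) * Bᵀ) a b := by
  have hentry : ∀ p q, (A * Matrix.single a b (1 : R) * B) p q = A p a * B b q := by
    intro p q
    simp [Matrix.mul_apply, Matrix.single_apply, ite_and]
  conv_lhs => rw [Matrix.matrix_eq_sum_single (A * Matrix.single a b 1 * B)]
  simp only [map_sum, hentry, Matrix.mul_apply, Matrix.transpose_apply, Matrix.of_apply,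
    Finset.sum_mul]
  rw [Finset.sum_comm]
  refine Finset.sum_congr rfl fun q _ => Finset.sum_congr rfl fun p _ => ?_
  rw [← mul_one (A p a * B b q), ← smul_eq_mul (A p a * B b q), ← Matrix.smul_single, map_smul,
    smul_eq_mul]
  ring

theorem norm_sum_sq_le_card_mul {E ι : Type*} [SeminormedAddCommGroup E] (s : Finset ι)
    (y : ι → E) : ‖∑ k ∈ s, y k‖ ^ 2 ≤ #s * ∑ k ∈ s, ‖y k‖ ^ 2 :=
  (pow_le_pow_left₀ (norm_nonneg _) (norm_sum_le _ _) 2).trans sq_sum_le_card_mul_sum_sq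

theorem integral_norm_sum_clm_sub_integral_sq_le {Ω E G ι : Type*} [MeasurableSpace Ω]
    {μ : Measure Ω} [NormedAddCommGroup E] [NormedSpace ℝ E] [CompleteSpace E]
    [NormedAddCommGroup G] [NormedSpace ℝ G] [CompleteSpace G] (s : Finset ι)
    (T : ι → E →L[ℝ] G) (X : ι → Ω → E) {c σ : ι → ℝ} (hT : ∀ k ∈ s, ‖T k‖ ≤ c k)
    (hX : ∀ k ∈ s, Integrable (X k) μ)
    (hX2 : ∀ k ∈ s, Integrable (fun ω => ‖X k ω - ∫ ω', X k ω' ∂μ‖ ^ 2) μ)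
    (hvar : ∀ k ∈ s, ∫ ω, ‖X k ω - ∫ ω', X k ω' ∂μ‖ ^ 2 ∂μ ≤ σ k ^ 2) :
    ∫ ω, ‖∑ k ∈ s, T k (X k ω) - ∫ ω', ∑ k ∈ s, T k (X k ω') ∂μ‖ ^ 2 ∂μ
      ≤ #s * ∑ k ∈ s, (c k * σ k) ^ 2 := by
  have hmean : ∫ ω', ∑ k ∈ s, T k (X k ω') ∂μ = ∑ k ∈ s, T k (∫ ω', X k ω' ∂μ) := by
    rw [integral_finsetSum s fun k hk => (T k).integrable_comp (hX k hk)]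
    exact sum_congr rfl fun k hk => (T k).integral_comp_comm (hX k hk)
  have hpointwise : ∀ ω, ‖∑ k ∈ s, T k (X k ω) - ∫ ω', ∑ k ∈ s, T k (X k ω') ∂μ‖ ^ 2
      ≤ #s * ∑ k ∈ s, c k ^ 2 * ‖X k ω - ∫ ω', X k ω' ∂μ‖ ^ 2 := by
    intro ω
    rw [hmean, ← sum_sub_distrib]
    refine (norm_sum_sq_le_card_mul _ _).trans (mul_le_mul_of_nonneg_left
      (sum_le_sum fun k hk => ?_) (Nat.cast_nonneg _))
    rw [← map_sub, ← mul_pow]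
    exact pow_le_pow_left₀ (norm_nonneg _) ((T k).le_of_opNorm_le (hT k hk) _) 2
  calc ∫ ω, ‖∑ k ∈ s, T k (X k ω) - ∫ ω', ∑ k ∈ s, T k (X k ω') ∂μ‖ ^ 2 ∂μ
      ≤ ∫ ω, #s * ∑ k ∈ s, c k ^ 2 * ‖X k ω - ∫ ω', X k ω' ∂μ‖ ^ 2 ∂μ :=
        integral_mono_of_nonneg (.of_forall fun _ => sq_nonneg _)
          ((integrable_finsetSum s fun k hk => (hX2 k hk).const_mul _).const_mul _)
          (.of_forall hpointwise)
    _ = #s * ∑ k ∈ s, c k ^ 2 * ∫ ω, ‖X k ω - ∫ ω', X k ω' ∂μ‖ ^ 2 ∂μ := by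
        rw [integral_const_mul, integral_finsetSum s fun k hk => (hX2 k hk).const_mul _]
        simp only [integral_const_mul]
    _ ≤ #s * ∑ k ∈ s, (c k * σ k) ^ 2 := by
        simp only [mul_pow]
        gcongr with k hk
        exact hvar k hk

theorem Matrix.l2_opNorm_transpose {m n : Type*} [Fintype m] [Fintype n] [DecidableEq m]
    [DecidableEq n] (A : Matrix m n ℝ) : ‖Aᵀ‖ = ‖A‖ := by
  rw [← conjTranspose_eq_transpose_of_trivial, l2_opNorm_conjTranspose]

theorem Matrix.differentiable_mulVec {m n : Type*} [Fintype m] [Fintype n] [DecidableEq m]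
    [DecidableEq n] (x : n → ℝ) : Differentiable ℝ fun M : Matrix m n ℝ => M *ᵥ x :=
  (LinearMap.toContinuousLinearMap ((mulVecBilin ℝ ℝ).flip x)).differentiable

section prodRev

variable {n d : ℕ}

theorem prodRev_union_of_forall_lt (W : Fin n → Matrix (Fin d) (Fin d) ℝ) {s t : Finset (Fin n)}
    (h : ∀ a ∈ s, ∀ b ∈ t, a < b) : prodRev W (s ∪ t) = prodRev W t * prodRev W s := by
  simp only [prodRev, Finset.sort_union_of_forall_lt h, List.map_append, List.reverse_append,
    List.prod_append]

@[simp]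
theorem prodRev_singleton (W : Fin n → Matrix (Fin d) (Fin d) ℝ) (i : Fin n) :
    prodRev W {i} = W i := by
  simp [prodRev]

theorem prodRev_congr {V W : Fin n → Matrix (Fin d) (Fin d) ℝ} {s : Finset (Fin n)}
    (h : ∀ j ∈ s, V j = W j) : prodRev V s = prodRev W s := by
  simp only [prodRev]
  rw [List.map_congr_left fun j hj => h j ((Finset.mem_sort _).1 hj)]

theorem prodRev_Iic_of_le (W : Fin n → Matrix (Fin d) (Fin d) ℝ) {i k : Fin n} (hik : i ≤ k) :
    prodRev W (Iic k) = prodRev W (Ioc i k) * W i * prodRev W (Iio i) := by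
  have hsplit : Iic k = Iio i ∪ ({i} ∪ Ioc i k) := by ext j; grind
  rw [hsplit, prodRev_union_of_forall_lt, prodRev_union_of_forall_lt, prodRev_singleton]
  all_goals grind

theorem norm_prodRev_le (W : Fin n → Matrix (Fin d) (Fin d) ℝ) (s : Finset (Fin n)) :
    ‖prodRev W s‖ ≤ ∏ j ∈ s, ‖W j‖ := by
  rcases isEmpty_or_nonempty (Fin d) with _ | _
  · rw [Subsingleton.elim (prodRev W s) 0, norm_zero]
    exact prod_nonneg fun _ _ => norm_nonneg _
  · calc ‖prodRev W s‖ ≤ ((((s.sort (· ≤ ·)).map W).reverse).map norm).prod :=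
          List.norm_prod_le _
      _ = ∏ j ∈ s, ‖W j‖ := by
          rw [List.map_reverse, List.prod_reverse, List.map_map, prod_eq_multiset_prod,
            ← sort_eq s (· ≤ ·), Multiset.map_coe, Multiset.prod_coe]
          rfl

theorem differentiable_prodRev (s : Finset (Fin n)) :
    Differentiable ℝ fun V : Fin n → Matrix (Fin d) (Fin d) ℝ => prodRev V s := by
  simp only [prodRev, ← List.map_reverse]
  exact fun _ => hasStrictFDerivAt_list_prod'.hasFDerivAt.differentiableAt

theorem prodRev_add_smul_single_of_notMem (W : Fin n → Matrix (Fin d) (Fin d) ℝ)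
    (E : Matrix (Fin d) (Fin d) ℝ) (t : ℝ) {i : Fin n} {s : Finset (Fin n)} (hi : i ∉ s) :
    prodRev (W + t • (Pi.single i E : Fin n → Matrix (Fin d) (Fin d) ℝ)) s = prodRev W s :=
  prodRev_congr fun j hj => by simp [Pi.single_eq_of_ne (ne_of_mem_of_not_mem hj hi)]

theorem prodRev_Iic_add_smul_single (W : Fin n → Matrix (Fin d) (Fin d) ℝ)
    (E : Matrix (Fin d) (Fin d) ℝ) (t : ℝ) (i k : Fin n) :
    prodRev (W + t • (Pi.single i E : Fin n → Matrix (Fin d) (Fin d) ℝ)) (Iic k)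
      = prodRev W (Iic k)
        + t • if i ≤ k then prodRev W (Ioc i k) * E * prodRev W (Iio i) else 0 := by
  split_ifs with hik
  · rw [prodRev_Iic_of_le _ hik, prodRev_Iic_of_le _ hik,
      prodRev_add_smul_single_of_notMem _ _ _ (by simp),
      prodRev_add_smul_single_of_notMem _ _ _ (by simp)]
    simp [mul_add, add_mul]
  · rw [smul_zero, add_zero, prodRev_add_smul_single_of_notMem _ _ _ (by simpa using hik)]

end prodRev

section matGrad

variable {n d : ℕ}

theorem matGrad_apply_eq_fderiv_of_line {E : Type*} [NormedAddCommGroup E] [NormedSpace ℝ E]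
    {g : (Fin n → Matrix (Fin d) (Fin d) ℝ) → ℝ} {W : Fin n → Matrix (Fin d) (Fin d) ℝ}
    {i : Fin n} {a b : Fin d} {F : E → ℝ} {y δ : E}
    (hg : DifferentiableAt ℝ g W) (hF : DifferentiableAt ℝ F y)
    (hline : ∀ t : ℝ,
      g (W + t • (Pi.single i (single a b 1) : Fin n → Matrix (Fin d) (Fin d) ℝ)) = F (y + t • δ)) :
    matGrad g W i a b = fderiv ℝ F y δ := by
  rw [matGrad, of_apply, ← hg.lineDeriv_eq_fderiv, ← hF.lineDeriv_eq_fderiv]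
  simp only [lineDeriv, hline]

theorem matGrad_widest (F : (Fin n → Fin d → ℝ) → ℝ) (hF : Differentiable ℝ F)
    (x : Fin d → ℝ) (V : Fin n → Matrix (Fin d) (Fin d) ℝ) (k : Fin n) :
    matGrad (fun V => F fun k' => V k' *ᵥ x) V k
      = of fun p q => fderiv ℝ F (fun k' => V k' *ᵥ x) (Pi.single k (single p q 1 *ᵥ x)) := by
  ext p q
  refine matGrad_apply_eq_fderiv_of_line ?_ (hF _) fun t => ?_
  · exact (hF _).comp V ((differentiable_pi.2 fun k' =>
      (Matrix.differentiable_mulVec x).comp (differentiable_apply (𝕜 := ℝ) k')) V)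
  · congr 1
    ext k' : 1
    simp only [Pi.add_apply, Pi.smul_apply, add_mulVec, smul_mulVec]
    rw [Pi.apply_single (fun _ M => M *ᵥ x) (fun _ => zero_mulVec x)]

theorem matGrad_narrowest_apply (F : (Fin n → Fin d → ℝ) → ℝ) (hF : Differentiable ℝ F)
    (x : Fin d → ℝ) (W : Fin n → Matrix (Fin d) (Fin d) ℝ) (i : Fin n) (a b : Fin d) :
    matGrad (fun V => F fun k => prodRev V (Iic k) *ᵥ x) W i a b
      = ∑ k ∈ Ici i, fderiv ℝ F (fun k => prodRev W (Iic k) *ᵥ x)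
          (Pi.single k ((prodRev W (Ioc i k) * single a b 1 * prodRev W (Iio i)) *ᵥ x)) := by
  rw [← map_sum]
  refine matGrad_apply_eq_fderiv_of_line ?_ (hF _) fun t => ?_
  · exact (hF _).comp W ((differentiable_pi.2 fun k =>
      (Matrix.differentiable_mulVec (m := Fin d) x).comp (differentiable_prodRev (Iic k))) W)
  · congr 1
    ext k : 1
    rw [prodRev_Iic_add_smul_single, Pi.add_apply, Pi.smul_apply, Finset.sum_apply,
      Finset.sum_pi_single]
    simp only [mem_Ici]
    split_ifs <;> simp [add_mulVec, smul_mulVec]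

theorem matGrad_narrowest_eq_sum (F : (Fin n → Fin d → ℝ) → ℝ) (hF : Differentiable ℝ F)
    (x : Fin d → ℝ) (W : Fin n → Matrix (Fin d) (Fin d) ℝ) (i : Fin n) :
    matGrad (fun V => F fun k => prodRev V (Iic k) *ᵥ x) W i
      = ∑ k ∈ Ici i, (prodRev W (Ioc i k))ᵀ
          * matGrad (fun V => F fun k' => V k' *ᵥ x) (fun k' => prodRev W (Iic k')) k
          * (prodRev W (Iio i))ᵀ := by
  ext a b
  rw [matGrad_narrowest_apply F hF, Matrix.sum_apply]
  refine Finset.sum_congr rfl fun k _ => ?_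
  rw [matGrad_widest F hF]
  exact ((fderiv ℝ F _).toLinearMap ∘ₗ LinearMap.single ℝ _ k ∘ₗ
    (mulVecBilin ℝ ℝ).flip x).apply_mul_single_mul _ _ a b

end matGrad

theorem gradient_variance_bound_general {n d : ℕ}
    {Ω : Type*} [MeasurableSpace Ω] (μ : Measure Ω)
    (F : Ω → (Fin n → (Fin d → ℝ)) → ℝ) (hF : ∀ ω, Differentiable ℝ (F ω))
    (x : Fin d → ℝ) (W : Fin n → Matrix (Fin d) (Fin d) ℝ) (i : Fin n)
    (σ : Fin n → ℝ)
    -- integrability of the widest-cell block gradients at the effective weights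
    (hint : ∀ k ∈ Finset.Ici i,
      Integrable (fun ω => matGrad (fun V => F ω fun k' => (V k').mulVec x)
        (fun k' => prodRev W (Finset.Iic k')) k) μ)
    -- their squared deviations from the mean are integrable (finite second moments) …
    (h2int : ∀ k ∈ Finset.Ici i,
      Integrable (fun ω =>
        ‖matGrad (fun V => F ω fun k' => (V k').mulVec x)
            (fun k' => prodRev W (Finset.Iic k')) k
          - ∫ ω', matGrad (fun V => F ω' fun k' => (V k').mulVec x)
              (fun k' => prodRev W (Finset.Iic k')) k ∂μ‖ ^ 2) μ)
    -- … and bounded by (σ^{(k)})²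
    (hvar : ∀ k ∈ Finset.Ici i,
      ∫ ω, ‖matGrad (fun V => F ω fun k' => (V k').mulVec x)
            (fun k' => prodRev W (Finset.Iic k')) k
          - ∫ ω', matGrad (fun V => F ω' fun k' => (V k').mulVec x)
              (fun k' => prodRev W (Finset.Iic k')) k ∂μ‖ ^ 2 ∂μ ≤ σ k ^ 2) :
    ∫ ω, ‖matGrad (fun V => F ω fun k' => (prodRev V (Finset.Iic k')).mulVec x) W i
        - ∫ ω', matGrad (fun V => F ω' fun k' => (prodRev V (Finset.Iic k')).mulVec x) W i ∂μ‖ ^ 2 ∂μ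
      ≤ (n : ℝ) * ∑ k ∈ Finset.Ici i,
          ((∏ j ∈ Finset.Iio i, ‖W j‖) * (∏ j ∈ Finset.Ioc i k, ‖W j‖) * σ k) ^ 2 := by
  have hT : ∀ k ∈ Ici i, ‖ContinuousLinearMap.mulLeftRight ℝ _ (prodRev W (Ioc i k))ᵀ
      (prodRev W (Iio i))ᵀ‖ ≤ (∏ j ∈ Iio i, ‖W j‖) * ∏ j ∈ Ioc i k, ‖W j‖ := by
    intro k _
    refine (ContinuousLinearMap.opNorm_mulLeftRight_apply_apply_le ℝ _ _ _).trans ?_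
    rw [mul_comm (∏ j ∈ Iio i, ‖W j‖), l2_opNorm_transpose, l2_opNorm_transpose]
    exact mul_le_mul (norm_prodRev_le W _) (norm_prodRev_le W _) (norm_nonneg _)
      (prod_nonneg fun _ _ => norm_nonneg _)
  simp only [matGrad_narrowest_eq_sum _ (hF _)]
  calc _ ≤ (#(Ici i) : ℝ) * _ :=
        integral_norm_sum_clm_sub_integral_sq_le (Ici i) _ _ hT hint h2int hvar
    _ ≤ (n : ℝ) * _ := by
        gcongr
        simp

theorem gradient_variance_bound {n d : ℕ} (hn : 1 ≤ n) (hd : 1 ≤ d)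
    {Ω : Type*} [MeasurableSpace Ω] (μ : Measure Ω) [IsProbabilityMeasure μ]
    (F : Ω → (Fin n → (Fin d → ℝ)) → ℝ) (hF : ∀ ω, Differentiable ℝ (F ω))
    (x : Fin d → ℝ) (W : Fin n → Matrix (Fin d) (Fin d) ℝ) (i : Fin n)
    (σ : Fin n → ℝ)
    -- integrability of the widest-cell block gradients at the effective weights
    (hint : ∀ k ∈ Finset.Ici i,
      Integrable (fun ω => matGrad (fun V => F ω fun k' => (V k').mulVec x)
        (fun k' => prodRev W (Finset.Iic k')) k) μ)
    -- their squared deviations from the mean are integrable (finite second moments) …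
    (h2int : ∀ k ∈ Finset.Ici i,
      Integrable (fun ω =>
        ‖matGrad (fun V => F ω fun k' => (V k').mulVec x)
            (fun k' => prodRev W (Finset.Iic k')) k
          - ∫ ω', matGrad (fun V => F ω' fun k' => (V k').mulVec x)
              (fun k' => prodRev W (Finset.Iic k')) k ∂μ‖ ^ 2) μ)
    -- … and bounded by (σ^{(k)})²
    (hvar : ∀ k ∈ Finset.Ici i,
      ∫ ω, ‖matGrad (fun V => F ω fun k' => (V k').mulVec x)
            (fun k' => prodRev W (Finset.Iic k')) k
          - ∫ ω', matGrad (fun V => F ω' fun k' => (V k').mulVec x)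
              (fun k' => prodRev W (Finset.Iic k')) k ∂μ‖ ^ 2 ∂μ ≤ σ k ^ 2) :
    ∫ ω, ‖matGrad (fun V => F ω fun k' => (prodRev V (Finset.Iic k')).mulVec x) W i
        - ∫ ω', matGrad (fun V => F ω' fun k' => (prodRev V (Finset.Iic k')).mulVec x) W i ∂μ‖ ^ 2 ∂μ
      ≤ (n : ℝ) * ∑ k ∈ Finset.Ici i,
          ((∏ j ∈ Finset.Iio i, ‖W j‖) * (∏ j ∈ Finset.Ioc i k, ‖W j‖) * σ k) ^ 2 :=
  gradient_variance_bound_general μ F hF x W i σ hint h2int hvar
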